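/- arXiv:2311.03041 — 2 statements merged into one kernel-verified Lean document; each statement's English description precedes it below -/
import Mathlib

section
/- Let p be a prime and n ≥ 1 an integer. The map y ↦ χ_y, where χ_y(x) = e(∑_{j∈ℤ} x_j·y_{−j}), is an isomorphism of topological groups from C_{p^n}((t)) onto its Pontryagin dual, i.e. onto the group of continuous homomorphisms from C_{p^n}((t)) to the circle group 𝕋, equipped with pointwise multiplication and the compact-open topology. In particular, C_{p^n}((t)) is self-dual. -/
open Filter Topology

noncomputable section

/-- `C_{pⁿ}((t))` : the restricted product of copies of `ℤ/pⁿℤ` indexed by `ℤ`, realised as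
formal series `∑_{i ∈ ℤ} x_i tⁱ` with coefficients `x_i ∈ ℤ/pⁿℤ` and `x_i = 0` for all but
finitely many `i < 0` (equivalently, with support bounded below, i.e. partially well ordered). -/
abbrev Cpn (p n : ℕ) : Type := HahnSeries ℤ (ZMod (p ^ n))

/-- The subgroup of series all of whose coefficients below `k` vanish.  For `k = 0` this is the
compact open subgroup `{x : x_i = 0 for all i < 0}` of the restricted product. -/
def hahnU (R : Type*) [AddCommGroup R] (k : ℤ) : AddSubgroup (HahnSeries ℤ R) where
  carrier := {x | ∀ j : ℤ, j < k → x.coeff j = 0}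
  zero_mem' := by intro j _; exact HahnSeries.coeff_zero
  add_mem' := by
    intro a b ha hb j hj
    rw [HahnSeries.coeff_add, ha j hj, hb j hj, add_zero]
  neg_mem' := by
    intro a ha j hj
    rw [HahnSeries.coeff_neg, ha j hj, neg_zero]

/-- The restricted-product topology on `C_{pⁿ}((t))` (and more generally on Hahn series over `ℤ`):
the group topology in which the subgroups `hahnU R k`, `k ∈ ℤ`, form a neighbourhood basis of `0`;
the subgroup `{x : x_i = 0 for all i < 0}` (with the product topology of the finite discrete
groups `ℤ/pⁿℤ`) is a compact open subgroup for it. -/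
instance hahnTopology (R : Type*) [AddCommGroup R] : TopologicalSpace (HahnSeries ℤ R) :=
  ⨅ k : ℤ, TopologicalSpace.induced
    (fun x : HahnSeries ℤ R => (QuotientAddGroup.mk x : HahnSeries ℤ R ⧸ hahnU R k)) ⊥

/-- The injective character `e : ℤ/Mℤ → 𝕋 = ℝ/ℤ`, `a ↦ exp(2πi·ã/M)`, written additively:
`a ↦ ã/M mod 1`. -/
def echarM (M : ℕ) (a : ZMod M) : AddCircle (1 : ℝ) :=
  (((a.val : ℝ) / (M : ℝ) : ℝ) : AddCircle (1 : ℝ))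

/-- The character `χ_y` of `C_{pⁿ}((t))`, `χ_y(x) = e(∑_{j ∈ ℤ} x_j · y_{-j})`
(a sum with only finitely many nonzero terms). -/
def chiFun (p n : ℕ) (y x : Cpn p n) : AddCircle (1 : ℝ) :=
  echarM (p ^ n) (∑ᶠ j : ℤ, x.coeff j * y.coeff (-j))


section HahnTop

variable {R : Type*} [AddCommGroup R]

lemma mem_hahnU {k : ℤ} {x : HahnSeries ℤ R} :
    x ∈ hahnU R k ↔ ∀ j : ℤ, j < k → x.coeff j = 0 := Iff.rfl

/-- agreement set: series agreeing with `y` strictly below `k`. -/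
def hahnS (y : HahnSeries ℤ R) (k : ℤ) : Set (HahnSeries ℤ R) :=
  {z | ∀ j : ℤ, j < k → z.coeff j = y.coeff j}

lemma mem_hahnS_self (y : HahnSeries ℤ R) (k : ℤ) : y ∈ hahnS y k := fun _ _ => rfl

lemma hahn_nhds (y : HahnSeries ℤ R) (s : Set (HahnSeries ℤ R)) :
    s ∈ 𝓝 y ↔ ∃ k : ℤ, hahnS y k ⊆ s := by
  have h0 : hahnTopology R = ⨅ k : ℤ, TopologicalSpace.induced
      (fun x : HahnSeries ℤ R => (QuotientAddGroup.mk x : HahnSeries ℤ R ⧸ hahnU R k)) ⊥ := rfl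
  have h1 : (𝓝 y : Filter (HahnSeries ℤ R)) = ⨅ k : ℤ, 𝓟 (hahnS y k) := by
    rw [h0, _root_.nhds_iInf]
    refine iInf_congr fun k => ?_
    letI tQ : TopologicalSpace (HahnSeries ℤ R ⧸ hahnU R k) := ⊥
    haveI : DiscreteTopology (HahnSeries ℤ R ⧸ hahnU R k) := ⟨rfl⟩
    rw [nhds_induced, nhds_discrete, Filter.comap_pure]
    congr 1
    ext z
    simp only [Set.mem_preimage, Set.mem_singleton_iff]
    rw [QuotientAddGroup.eq]
    constructor
    · intro h j hj
      have h2 := h j hj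
      rw [HahnSeries.coeff_add, HahnSeries.coeff_neg] at h2
      exact neg_add_eq_zero.mp h2
    · intro h j hj
      rw [HahnSeries.coeff_add, HahnSeries.coeff_neg, h j hj, neg_add_cancel]
  rw [h1, mem_iInf_of_directed]
  · simp only [Filter.mem_principal]
  · intro k₁ k₂
    refine ⟨max k₁ k₂, ?_, ?_⟩ <;>
      exact Filter.principal_mono.2
        (fun z hz j hj => hz j (lt_of_lt_of_le hj (by simp [le_max_left, le_max_right])))

lemma isOpen_hahnS (y : HahnSeries ℤ R) (k : ℤ) : IsOpen (hahnS y k) := by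
  rw [isOpen_iff_mem_nhds]
  intro z hz
  rw [hahn_nhds]
  exact ⟨k, fun w hw j hj => (hw j hj).trans (hz j hj)⟩

lemma hahn_continuous {X : Type*} [TopologicalSpace X] (f : HahnSeries ℤ R → X)
    (h : ∀ y, ∃ k, ∀ z ∈ hahnS y k, f z = f y) : Continuous f := by
  rw [continuous_iff_continuousAt]
  intro y
  intro s hs
  rw [Filter.mem_map, hahn_nhds]
  obtain ⟨k, hk⟩ := h y
  exact ⟨k, fun z hz => by
    rw [Set.mem_preimage, hk z hz]; exact mem_of_mem_nhds hs⟩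

lemma hahn_bound (x : HahnSeries ℤ R) : ∃ N : ℤ, ∀ m : ℤ, m < N → x.coeff m = 0 := by
  rcases eq_or_ne x 0 with rfl | hx
  · exact ⟨0, fun m _ => HahnSeries.coeff_zero⟩
  · exact ⟨x.order, fun m hm => HahnSeries.coeff_eq_zero_of_lt_order hm⟩

lemma isPWO_of_bdd (s : Set ℤ) (a : ℤ) (h : ∀ m ∈ s, a ≤ m) : s.IsPWO :=
  Set.IsWF.isPWO (BddBelow.wellFoundedOn_lt ⟨a, h⟩)

/-- coefficient extraction as an additive hom -/
def hahnCoeffHom (j : ℤ) : HahnSeries ℤ R →+ R :=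
  AddMonoidHom.mk' (fun x => x.coeff j) (fun _ _ => HahnSeries.coeff_add)

lemma hahn_nsmul_coeff (c : ℕ) (x : HahnSeries ℤ R) (j : ℤ) :
    (c • x).coeff j = c • (x.coeff j) :=
  map_nsmul (hahnCoeffHom j) c x

end HahnTop

section Pair

variable {A : Type*} [CommRing A]

/-- the pairing `∑ⱼ xⱼ y₋ⱼ` -/
def hahnPair (x y : HahnSeries ℤ A) : A := ∑ᶠ j : ℤ, x.coeff j * y.coeff (-j)

lemma hahnPair_support_finite (x y : HahnSeries ℤ A) :
    (Function.support fun j : ℤ => x.coeff j * y.coeff (-j)).Finite := by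
  obtain ⟨N₁, h₁⟩ := hahn_bound x
  obtain ⟨N₂, h₂⟩ := hahn_bound y
  refine Set.Finite.subset (Set.finite_Icc N₁ (-N₂)) ?_
  intro j hj
  rw [Function.mem_support] at hj
  rw [Set.mem_Icc]
  constructor
  · by_contra h; rw [h₁ j (by omega), zero_mul] at hj; exact hj rfl
  · by_contra h; rw [h₂ (-j) (by omega), mul_zero] at hj; exact hj rfl

lemma hahnPair_add_left (x x' y : HahnSeries ℤ A) :
    hahnPair (x + x') y = hahnPair x y + hahnPair x' y := by
  unfold hahnPair
  rw [← finsum_add_distrib (hahnPair_support_finite x y) (hahnPair_support_finite x' y)]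
  exact finsum_congr fun j => by rw [HahnSeries.coeff_add, add_mul]

lemma hahnPair_add_right (x y y' : HahnSeries ℤ A) :
    hahnPair x (y + y') = hahnPair x y + hahnPair x y' := by
  unfold hahnPair
  rw [← finsum_add_distrib (hahnPair_support_finite x y) (hahnPair_support_finite x y')]
  exact finsum_congr fun j => by rw [HahnSeries.coeff_add, mul_add]

lemma hahnPair_single_left (i : ℤ) (a : A) (y : HahnSeries ℤ A) :
    hahnPair (HahnSeries.single i a) y = a * y.coeff (-i) := by
  unfold hahnPair
  rw [finsum_eq_single _ i]
  · rw [HahnSeries.coeff_single_same]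
  · intro j hj
    rw [HahnSeries.coeff_single_of_ne hj, zero_mul]

lemma hahnPair_eq_zero {x y : HahnSeries ℤ A}
    (h : ∀ j : ℤ, x.coeff j * y.coeff (-j) = 0) : hahnPair x y = 0 := by
  unfold hahnPair
  rw [finsum_congr h, finsum_zero]

lemma hahnPair_zero_of (c : ℤ) {x y : HahnSeries ℤ A}
    (hx : ∀ j : ℤ, j < c → x.coeff j = 0) (hy : ∀ j : ℤ, j < 1 - c → y.coeff j = 0) :
    hahnPair x y = 0 :=
  hahnPair_eq_zero fun j => by
    by_cases hj : j < c
    · rw [hx j hj, zero_mul]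
    · rw [hy (-j) (by omega), mul_zero]

end Pair

section ModM

variable (M : ℕ) [NeZero M]

local notation "GM" => HahnSeries ℤ (ZMod M)

lemma echarM_eq (a : ZMod M) : echarM M a = ZMod.toAddCircle a :=
  (ZMod.toAddCircle_apply a).symm

lemma hahn_card_smul (x : GM) : M • x = 0 := by
  ext j
  rw [hahn_nsmul_coeff, nsmul_eq_mul, ZMod.natCast_self, zero_mul, HahnSeries.coeff_zero]

lemma torsion_mem_range {t : AddCircle (1 : ℝ)} (h : M • t = 0) :
    ∃ a : ZMod M, ZMod.toAddCircle a = t := by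
  obtain ⟨r, rfl⟩ := QuotientAddGroup.mk_surjective t
  have h1 : ((M • r : ℝ) : AddCircle (1 : ℝ)) = 0 := by
    rw [show ((M • r : ℝ) : AddCircle (1 : ℝ)) = M • ((r : ℝ) : AddCircle (1 : ℝ)) from
      map_nsmul (QuotientAddGroup.mk' _) M r]
    exact h
  rw [AddCircle.coe_eq_zero_iff] at h1
  obtain ⟨z, hz⟩ := h1
  refine ⟨(z : ZMod M), ?_⟩
  rw [ZMod.toAddCircle_intCast]
  have hM : (M : ℝ) ≠ 0 := Nat.cast_ne_zero.2 (NeZero.ne M)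
  congr 1
  rw [zsmul_eq_mul, mul_one, nsmul_eq_mul] at hz
  field_simp
  linarith [hz]

/-- an open neighbourhood of `0` in the circle meeting the `M`-torsion only in `0`. -/
def circV : Set (AddCircle (1 : ℝ)) :=
  (Set.range (ZMod.toAddCircle (N := M)) \ {0})ᶜ

lemma isOpen_circV : IsOpen (circV M) :=
  (Set.Finite.isClosed ((Set.finite_range _).subset Set.diff_subset)).isOpen_compl

lemma zero_mem_circV : (0 : AddCircle (1 : ℝ)) ∈ circV M := by
  simp [circV]

lemma eq_zero_of_mem_circV {a : ZMod M} (h : ZMod.toAddCircle a ∈ circV M) : a = 0 := by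
  by_contra ha
  exact h ⟨Set.mem_range_self a, by simpa using ha⟩

/-- the character `χ_y` as a bundled continuous additive monoid hom. -/
def chiHom (y : GM) : ContinuousAddMonoidHom GM (AddCircle (1 : ℝ)) where
  toAddMonoidHom := AddMonoidHom.mk' (fun x => ZMod.toAddCircle (hahnPair x y))
    (fun a b => by
      show ZMod.toAddCircle (hahnPair (a + b) y)
          = ZMod.toAddCircle (hahnPair a y) + ZMod.toAddCircle (hahnPair b y)
      rw [hahnPair_add_left, map_add])
  continuous_toFun := by
    apply hahn_continuous
    intro x
    obtain ⟨N, hN⟩ := hahn_bound y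
    refine ⟨1 - N, fun z hz => ?_⟩
    have h0 : hahnPair (z - x) y = 0 :=
      hahnPair_zero_of (1 - N)
        (fun j hj => by rw [HahnSeries.coeff_sub, hz j hj, sub_self])
        (fun j hj => hN j (by omega))
    have hzx : x + (z - x) = z := by abel
    show ZMod.toAddCircle (hahnPair z y) = ZMod.toAddCircle (hahnPair x y)
    rw [← hzx, hahnPair_add_left, h0, add_zero]

lemma chiHom_apply (y x : GM) : chiHom M y x = ZMod.toAddCircle (hahnPair x y) := rfl

lemma chiHom_add (y z : GM) : chiHom M (y + z) = chiHom M y + chiHom M z := by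
  refine ContinuousAddMonoidHom.ext fun x => ?_
  show ZMod.toAddCircle (hahnPair x (y + z))
      = ZMod.toAddCircle (hahnPair x y) + ZMod.toAddCircle (hahnPair x z)
  rw [hahnPair_add_right, map_add]

lemma chiHom_single (y : GM) (m : ℤ) :
    chiHom M y (HahnSeries.single (-m) (1 : ZMod M)) = ZMod.toAddCircle (y.coeff m) := by
  rw [chiHom_apply, hahnPair_single_left, neg_neg, one_mul]

lemma chiHom_injective : Function.Injective (chiHom M) := by
  intro y y' h
  ext m
  have h2 := DFunLike.congr_fun h (HahnSeries.single (-m) (1 : ZMod M))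
  rw [chiHom_single, chiHom_single] at h2
  exact (ZMod.toAddCircle_injective M) h2

lemma chi_torsion (χ : ContinuousAddMonoidHom GM (AddCircle (1 : ℝ))) (x : GM) :
    ∃ a : ZMod M, ZMod.toAddCircle a = χ x := by
  refine torsion_mem_range M ?_
  rw [← map_nsmul χ M x, hahn_card_smul, map_zero]

lemma chi_vanish (χ : ContinuousAddMonoidHom GM (AddCircle (1 : ℝ))) :
    ∃ k : ℤ, ∀ z : GM, (∀ j : ℤ, j < k → z.coeff j = 0) → χ z = 0 := by
  have hV : χ ⁻¹' (circV M) ∈ 𝓝 (0 : GM) := by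
    apply ((map_continuous χ).continuousAt (x := (0 : GM))).preimage_mem_nhds
    rw [map_zero]
    exact (isOpen_circV M).mem_nhds (zero_mem_circV M)
  rw [hahn_nhds] at hV
  obtain ⟨k, hk⟩ := hV
  refine ⟨k, fun z hz => ?_⟩
  have h1 : χ z ∈ circV M := hk (fun j hj => by rw [hz j hj, HahnSeries.coeff_zero])
  obtain ⟨a, ha⟩ := chi_torsion M χ z
  rw [← ha] at h1 ⊢
  rw [eq_zero_of_mem_circV M h1, map_zero]

lemma chiHom_surjective : Function.Surjective (chiHom M) := by
  intro χ
  obtain ⟨k₀, hvan⟩ := chi_vanish M χ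
  have hspec : ∀ m : ℤ, ZMod.toAddCircle (Classical.choose (chi_torsion M χ
      (HahnSeries.single (-m) (1 : ZMod M)))) = χ (HahnSeries.single (-m) (1 : ZMod M)) :=
    fun m => Classical.choose_spec (chi_torsion M χ _)
  set yc : ℤ → ZMod M := fun m =>
    Classical.choose (chi_torsion M χ (HahnSeries.single (-m) (1 : ZMod M))) with hyc_def
  have hyc0 : ∀ m : ℤ, m < 1 - k₀ → yc m = 0 := by
    intro m hm
    have h0 : χ (HahnSeries.single (-m) (1 : ZMod M)) = 0 :=
      hvan _ (fun j hj => HahnSeries.coeff_single_of_ne (by omega))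
    apply ZMod.toAddCircle_injective M
    rw [hspec m, h0, map_zero]
  set y : GM := HahnSeries.mk yc
    (isPWO_of_bdd _ (1 - k₀) (fun m hm => by
      by_contra h
      rw [Function.mem_support] at hm
      exact hm (hyc0 m (by omega)))) with hy_def
  have hycoeff : ∀ m, y.coeff m = yc m := fun m => rfl
  refine ⟨y, ContinuousAddMonoidHom.ext fun x => ?_⟩
  -- decompose x
  obtain ⟨Nx, hNx⟩ := hahn_bound x
  have hFfin : (x.support ∩ Set.Iio k₀).Finite := by
    refine Set.Finite.subset (Set.finite_Ico Nx k₀) ?_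
    rintro j ⟨hj1, hj2⟩
    rw [Set.mem_Ico]
    refine ⟨?_, hj2⟩
    by_contra h
    exact hj1 (hNx j (by omega))
  set F : Finset ℤ := hFfin.toFinset with hF_def
  set trunc : GM := ∑ j ∈ F, HahnSeries.single j (x.coeff j) with htr_def
  have htc : ∀ i : ℤ, trunc.coeff i = if i ∈ F then x.coeff i else 0 := by
    intro i
    have h1 : trunc.coeff i = ∑ j ∈ F, (HahnSeries.single j (x.coeff j)).coeff i :=
      map_sum (hahnCoeffHom i) (fun j => HahnSeries.single j (x.coeff j)) F
    rw [h1]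
    by_cases hi : i ∈ F
    · rw [Finset.sum_eq_single_of_mem i hi
        (fun j _ hji => HahnSeries.coeff_single_of_ne (Ne.symm hji)),
        HahnSeries.coeff_single_same, if_pos hi]
    · rw [Finset.sum_eq_zero (fun j hj => HahnSeries.coeff_single_of_ne
        (by rintro rfl; exact hi hj)), if_neg hi]
  have htail : ∀ j : ℤ, j < k₀ → (x - trunc).coeff j = 0 := by
    intro j hj
    rw [HahnSeries.coeff_sub, htc j]
    by_cases hjF : j ∈ F
    · rw [if_pos hjF, sub_self]
    · rw [if_neg hjF, sub_zero]
      by_contra h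
      exact hjF (hFfin.mem_toFinset.2 ⟨h, hj⟩)
  have hsingle : ∀ (i : ℤ) (a : ZMod M),
      χ (HahnSeries.single i a) = chiHom M y (HahnSeries.single i a) := by
    intro i a
    have h1 : HahnSeries.single i a = a.val • HahnSeries.single i (1 : ZMod M) := by
      ext j
      rw [hahn_nsmul_coeff]
      by_cases hji : j = i
      · subst hji
        rw [HahnSeries.coeff_single_same, HahnSeries.coeff_single_same, nsmul_eq_mul,
          mul_one, ZMod.natCast_rightInverse a]
      · rw [HahnSeries.coeff_single_of_ne hji, HahnSeries.coeff_single_of_ne hji, smul_zero]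
    have h2 : χ (HahnSeries.single i (1 : ZMod M)) = ZMod.toAddCircle (y.coeff (-i)) := by
      conv_lhs => rw [show (i : ℤ) = -(-i) from (neg_neg i).symm]
      exact (hspec (-i)).symm
    rw [chiHom_apply, hahnPair_single_left, h1,
      map_nsmul χ a.val (HahnSeries.single i (1 : ZMod M)), h2,
      ← map_nsmul (ZMod.toAddCircle (N := M)) a.val (y.coeff (-i))]
    congr 1
    rw [nsmul_eq_mul, ZMod.natCast_rightInverse a]
  have hdec : x = trunc + (x - trunc) := by abel
  symm
  calc χ x = χ trunc + χ (x - trunc) := by rw [← map_add, ← hdec]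
    _ = χ trunc := by rw [hvan _ htail, add_zero]
    _ = ∑ j ∈ F, χ (HahnSeries.single j (x.coeff j)) := map_sum χ _ F
    _ = ∑ j ∈ F, chiHom M y (HahnSeries.single j (x.coeff j)) :=
        Finset.sum_congr rfl (fun j _ => hsingle j (x.coeff j))
    _ = chiHom M y trunc := (map_sum (chiHom M y) _ F).symm
    _ = chiHom M y trunc + chiHom M y (x - trunc) := by
        have hz0 : chiHom M y (x - trunc) = 0 := by
          rw [chiHom_apply, hahnPair_zero_of k₀ htail
            (fun j hj => by rw [hycoeff, hyc0 j hj]), map_zero]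
        rw [hz0, add_zero]
    _ = chiHom M y x := by rw [← map_add, ← hdec]

lemma isCompact_hahnUset (c : ℤ) :
    IsCompact {x : GM | ∀ j : ℤ, j < c → x.coeff j = 0} := by
  classical
  letI : TopologicalSpace (ZMod M) := ⊥
  haveI : DiscreteTopology (ZMod M) := ⟨rfl⟩
  set f : (↥(Set.Ici c) → ZMod M) → GM := fun g =>
    HahnSeries.mk (fun j => if h : c ≤ j then g ⟨j, h⟩ else 0)
      (isPWO_of_bdd _ c (fun m hm => by
        by_contra h
        rw [Function.mem_support, dif_neg h] at hm
        exact hm rfl)) with hf_def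
  have hfc : ∀ g j, (f g).coeff j = if h : c ≤ j then g ⟨j, h⟩ else 0 := fun g j => rfl
  have hcont : Continuous f := by
    have h0 : hahnTopology (ZMod M) = ⨅ k : ℤ, TopologicalSpace.induced
        (fun x : GM => (QuotientAddGroup.mk x : GM ⧸ hahnU (ZMod M) k)) ⊥ := rfl
    rw [continuous_iff_coinduced_le, h0, le_iInf_iff]
    intro k
    rw [← continuous_iff_coinduced_le, continuous_induced_rng]
    letI tQ : TopologicalSpace (GM ⧸ hahnU (ZMod M) k) := ⊥
    haveI : DiscreteTopology (GM ⧸ hahnU (ZMod M) k) := ⟨rfl⟩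
    apply IsLocallyConstant.continuous
    rw [IsLocallyConstant.iff_exists_open]
    intro g₀
    haveI : Finite ↥(Set.Ico c k) := (Set.finite_Ico c k).to_subtype
    refine ⟨⋂ (j : ↥(Set.Ico c k)),
      {g : ↥(Set.Ici c) → ZMod M | g ⟨j.1, j.2.1⟩ = g₀ ⟨j.1, j.2.1⟩}, ?_, ?_, ?_⟩
    · refine isOpen_iInter_of_finite fun j => ?_
      have heq : {g : ↥(Set.Ici c) → ZMod M | g ⟨j.1, j.2.1⟩ = g₀ ⟨j.1, j.2.1⟩}
          = (fun g : ↥(Set.Ici c) → ZMod M => g ⟨j.1, j.2.1⟩) ⁻¹' {g₀ ⟨j.1, j.2.1⟩} := rfl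
      rw [heq]
      exact (isOpen_discrete _).preimage (continuous_apply _)
    · exact Set.mem_iInter.2 fun j => rfl
    · intro g hg
      show QuotientAddGroup.mk (f g) = QuotientAddGroup.mk (f g₀)
      rw [QuotientAddGroup.eq]
      intro j hj
      rw [HahnSeries.coeff_add, HahnSeries.coeff_neg, hfc, hfc]
      by_cases hcj : c ≤ j
      · rw [dif_pos hcj, dif_pos hcj,
          Set.mem_iInter.1 hg ⟨j, ⟨hcj, hj⟩⟩, neg_add_cancel]
      · rw [dif_neg hcj, dif_neg hcj, neg_add_cancel]
  have hrange : Set.range f = {x : GM | ∀ j : ℤ, j < c → x.coeff j = 0} := by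
    ext x
    constructor
    · rintro ⟨g, rfl⟩ j hj
      rw [hfc, dif_neg (by omega)]
    · intro hx
      refine ⟨fun j => x.coeff j.1, ?_⟩
      ext j
      rw [hfc (fun j => x.coeff j.1) j]
      by_cases hcj : c ≤ j
      · rw [dif_pos hcj]
      · rw [dif_neg hcj]
        exact (hx j (by omega)).symm
  rw [← hrange]
  exact isCompact_range hcont

lemma compact_bound {K : Set GM} (hK : IsCompact K) :
    ∃ c : ℤ, ∀ x ∈ K, ∀ j : ℤ, j < c → x.coeff j = 0 := by
  choose N hN using hahn_bound (R := ZMod M)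
  obtain ⟨t, -, ht⟩ := hK.elim_nhds_subcover (fun x => hahnS x (N x))
    (fun x _ => (isOpen_hahnS x (N x)).mem_nhds (mem_hahnS_self x _))
  obtain ⟨c, hc⟩ : ∃ c : ℤ, ∀ x ∈ t, c ≤ N x := by
    obtain ⟨b, hb⟩ := Finset.exists_le (t.image (fun x => -N x))
    exact ⟨-b, fun x hx => by
      have := hb _ (Finset.mem_image_of_mem _ hx); omega⟩
  refine ⟨c, fun x hx j hj => ?_⟩
  rcases Set.mem_iUnion₂.1 (ht hx) with ⟨z, hz, hxz⟩
  rw [hxz j (lt_of_lt_of_le hj (hc z hz)), hN z j (lt_of_lt_of_le hj (hc z hz))]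

lemma chiHom_continuous : Continuous (chiHom M) := by
  rw [(ContinuousAddMonoidHom.isInducing_toContinuousMap _ _).continuous_iff]
  rw [ContinuousMap.compactOpen_eq, continuous_generateFrom_iff]
  rintro s ⟨K, hK, V, hV, rfl⟩
  rw [isOpen_iff_mem_nhds]
  intro y hy
  simp only [Set.mem_preimage, Set.mem_setOf_eq] at hy
  rw [hahn_nhds]
  obtain ⟨c, hc⟩ := compact_bound M hK
  refine ⟨1 - c, fun z hz => ?_⟩
  simp only [Set.mem_preimage, Set.mem_setOf_eq]
  intro x hx
  have h0 : hahnPair x (z - y) = 0 :=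
    hahnPair_zero_of c (hc x hx)
      (fun j hj => by rw [HahnSeries.coeff_sub, hz j hj, sub_self])
  have hzz : y + (z - y) = z := by abel
  show chiHom M z x ∈ V
  have h1 : chiHom M z x = chiHom M y x := by
    show ZMod.toAddCircle (hahnPair x z) = ZMod.toAddCircle (hahnPair x y)
    rw [← hzz, hahnPair_add_right, h0, add_zero]
  rw [h1]
  exact hy hx

lemma chiHom_isOpenMap_image {U : Set GM} (hU : IsOpen U) : IsOpen (chiHom M '' U) := by
  rw [isOpen_iff_mem_nhds]
  rintro χ ⟨y, hyU, rfl⟩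
  obtain ⟨k, hk⟩ := (hahn_nhds y U).1 (hU.mem_nhds hyU)
  set Kc : Set GM := {x : GM | ∀ j : ℤ, j < 1 - k → x.coeff j = 0} with hKc_def
  set W : Set (ContinuousAddMonoidHom GM (AddCircle (1 : ℝ))) :=
    {ψ | Set.MapsTo ψ Kc (circV M)} with hW_def
  have hWopen : IsOpen W := by
    have h1 : IsOpen {f : C(GM, AddCircle (1 : ℝ)) | Set.MapsTo f Kc (circV M)} :=
      ContinuousMap.isOpen_setOf_mapsTo (isCompact_hahnUset M (1 - k)) (isOpen_circV M)
    exact h1.preimage (ContinuousAddMonoidHom.isInducing_toContinuousMap _ _).continuous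
  have hmem : chiHom M y ∈ (fun ψ => chiHom M y + ψ) '' W := by
    refine ⟨0, fun x _ => ?_, add_zero _⟩
    show (0 : ContinuousAddMonoidHom GM (AddCircle (1 : ℝ))) x ∈ circV M
    have h00 : (0 : ContinuousAddMonoidHom GM (AddCircle (1 : ℝ))) x = 0 := rfl
    rw [h00]
    exact zero_mem_circV M
  refine Filter.mem_of_superset
    ((isOpenMap_add_left (chiHom M y) _ hWopen).mem_nhds hmem) ?_
  rintro _ ⟨ψ, hψ, rfl⟩
  obtain ⟨z, rfl⟩ := chiHom_surjective M ψ
  have hz : ∀ m : ℤ, m < k → z.coeff m = 0 := by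
    intro m hm
    have hxK : HahnSeries.single (-m) (1 : ZMod M) ∈ Kc :=
      fun j hj => HahnSeries.coeff_single_of_ne (by omega)
    have h2 := hψ hxK
    rw [chiHom_single] at h2
    exact eq_zero_of_mem_circV M h2
  refine ⟨y + z, hk (fun j hj => ?_), chiHom_add M y z⟩
  rw [HahnSeries.coeff_add, hz j (by omega), add_zero]

end ModM

/-- Let `p` be a prime and `n ≥ 1`.  The map `y ↦ χ_y` is an isomorphism of
topological groups from `C_{pⁿ}((t))` onto its Pontryagin dual, i.e. onto the group of
continuous homomorphisms from `C_{pⁿ}((t))` to the circle group `𝕋 = ℝ/ℤ`, equipped with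
pointwise addition (multiplication, written multiplicatively) and the compact-open topology.
In particular, `C_{pⁿ}((t))` is self-dual. -/
theorem statement0 (p n : ℕ) (hp : p.Prime) (hn : 1 ≤ n) :
    ∃ e : Cpn p n ≃ₜ ContinuousAddMonoidHom (Cpn p n) (AddCircle (1 : ℝ)),
      (∀ y z : Cpn p n, e (y + z) = e y + e z) ∧
      (∀ y x : Cpn p n, e y x = chiFun p n y x) := by
  haveI : NeZero (p ^ n) := ⟨(pow_pos hp.pos n).ne'⟩
  set M := p ^ n with hM
  have hbij : Function.Bijective (chiHom M) := ⟨chiHom_injective M, chiHom_surjective M⟩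
  refine ⟨{ toEquiv := Equiv.ofBijective _ hbij
            continuous_toFun := chiHom_continuous M
            continuous_invFun := ?_ }, ?_, ?_⟩
  · rw [continuous_def]
    intro U hUopen
    show IsOpen (⇑(Equiv.ofBijective (chiHom M) hbij).symm ⁻¹' U)
    rw [← Equiv.image_eq_preimage_symm]
    exact chiHom_isOpenMap_image M hUopen
  · intro y z
    exact chiHom_add M y z
  · intro y x
    show chiHom M y x = chiFun p n y x
    rw [chiHom_apply]
    show ZMod.toAddCircle (hahnPair x y) = echarM M (hahnPair x y)
    exact (echarM_eq M _).symm
end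
end

section
/- For every subset S ⊆ {1, 2, 3, …} and all x, y ∈ K = 𝔽_p((t)), the family of coefficients c_m = ∑_{n∈S} x_{m−n}·y_{m+n} (m ∈ ℤ) consists of finite sums, vanishes for m ≤ ν(x) when x ≠ 0, and hence defines a Laurent series η_S(x,y) ∈ K with (η_S(x,y))_m = c_m. The resulting map η_S : K × K → K is additive in each variable, jointly continuous, and equivariant: η_S(t·x, t·y) = t·η_S(x,y) for all x, y ∈ K. -/
noncomputable section

/-- `𝔽_p((t))`, the field of formal Laurent series over `𝔽_p = ℤ/pℤ`. -/
abbrev Kp (p : ℕ) : Type := HahnSeries ℤ (ZMod p)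

lemma isPWO_Ici (a : ℤ) : (Set.Ici a).IsPWO := by
  have h2 : ((fun k : ℕ => a + (k : ℤ)) '' Set.univ).IsPWO :=
    ((Set.isWF_univ_iff.mpr (inferInstance : WellFoundedLT ℕ)).isPWO).image_of_monotone
      (fun i j hij => by omega)
  have heq : Set.Ici a = (fun k : ℕ => a + (k : ℤ)) '' Set.univ := by
    ext m
    simp only [Set.image_univ, Set.mem_range, Set.mem_Ici]
    constructor
    · intro hm; exact ⟨(m - a).toNat, by omega⟩
    · rintro ⟨k, rfl⟩; omega
  rw [heq]; exact h2

/-- `η_S(x,y)`: the Laurent series whose coefficient of `t^m` is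
`∑_{n ∈ S} x_{m-n} · y_{m+n}` (a finite sum for each `m`). -/
def etaS (p : ℕ) (S : Set ℕ) (x y : Kp p) : Kp p :=
  ⟨fun m => ∑ᶠ n ∈ S, x.coeff (m - (n : ℤ)) * y.coeff (m + (n : ℤ)), by
    refine (isPWO_Ici x.order).mono ?_
    intro m hm
    simp only [Function.mem_support] at hm
    rw [Set.mem_Ici]
    by_contra hlt
    push_neg at hlt
    apply hm
    apply finsum_mem_of_eqOn_zero
    intro n _
    have hc : x.coeff (m - (n : ℤ)) = 0 :=
      HahnSeries.coeff_eq_zero_of_lt_order (by omega)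
    show x.coeff (m - (n : ℤ)) * y.coeff (m + (n : ℤ)) = (0 : ℕ → ZMod p) n
    rw [hc, zero_mul, Pi.zero_apply]⟩

lemma etaS_coeff (p : ℕ) (S : Set ℕ) (x y : Kp p) (m : ℤ) :
    (etaS p S x y).coeff m = ∑ᶠ n ∈ S, x.coeff (m - (n : ℤ)) * y.coeff (m + (n : ℤ)) := rfl

lemma eta_supp_finite (p : ℕ) (S : Set ℕ) (x y : Kp p) (m : ℤ) :
    (S ∩ Function.support fun n : ℕ => x.coeff (m - (n : ℤ)) * y.coeff (m + (n : ℤ))).Finite := by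
  by_cases hx : x = 0
  · subst hx
    have : (Function.support fun n : ℕ =>
        (0 : Kp p).coeff (m - (n : ℤ)) * y.coeff (m + (n : ℤ))) = ∅ := by
      ext n; simp
    rw [this, Set.inter_empty]
    exact Set.finite_empty
  · refine Set.Finite.subset (Set.finite_Iic (m - x.order).toNat) ?_
    rintro n ⟨hnS, hn⟩
    simp only [Function.mem_support] at hn
    have hc : x.coeff (m - (n : ℤ)) ≠ 0 := fun h => hn (by rw [h, zero_mul])
    have hord := HahnSeries.order_le_of_coeff_ne_zero hc
    simp only [Set.mem_Iic]
    omega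

lemma single_one_mul_coeff (p : ℕ) (x : Kp p) (m : ℤ) :
    (HahnSeries.single (1:ℤ) (1:ZMod p) * x).coeff m = x.coeff (m - 1) := by
  have h : m = (m - 1) + 1 := by ring
  conv_lhs => rw [h, HahnSeries.coeff_single_mul_add]
  rw [one_mul]

/-- For every subset `S ⊆ {1,2,3,…}` and all `x, y ∈ K = 𝔽_p((t))`: the family
of coefficients `c_m = ∑_{n ∈ S} x_{m−n}·y_{m+n}` consists of finite sums, vanishes for
`m ≤ ν(x)` when `x ≠ 0`, and hence defines a Laurent series `η_S(x,y) ∈ K` with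
`(η_S(x,y))_m = c_m`.  The resulting map `η_S : K × K → K` is additive in each variable,
jointly continuous, and equivariant: `η_S(t·x, t·y) = t·η_S(x,y)`. -/
theorem statement6 (p : ℕ) (hp : p.Prime) (S : Set ℕ) (hS : ∀ n ∈ S, 1 ≤ n) :
    (∀ (x y : Kp p) (m : ℤ),
      (S ∩ Function.support fun n : ℕ =>
        x.coeff (m - (n : ℤ)) * y.coeff (m + (n : ℤ))).Finite) ∧
    (∀ (x y : Kp p), x ≠ 0 → ∀ m : ℤ, m ≤ x.order →
      (∑ᶠ n ∈ S, x.coeff (m - (n : ℤ)) * y.coeff (m + (n : ℤ))) = 0) ∧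
    (∀ (x y : Kp p) (m : ℤ),
      (etaS p S x y).coeff m = ∑ᶠ n ∈ S, x.coeff (m - (n : ℤ)) * y.coeff (m + (n : ℤ))) ∧
    (∀ x y z : Kp p, etaS p S (x + y) z = etaS p S x z + etaS p S y z) ∧
    (∀ x y z : Kp p, etaS p S x (y + z) = etaS p S x y + etaS p S x z) ∧
    Continuous (fun q : Kp p × Kp p => etaS p S q.1 q.2) ∧
    (∀ x y : Kp p,
      etaS p S (HahnSeries.single (1 : ℤ) (1 : ZMod p) * x)
        (HahnSeries.single (1 : ℤ) (1 : ZMod p) * y)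
      = HahnSeries.single (1 : ℤ) (1 : ZMod p) * etaS p S x y) := by
  refine ⟨eta_supp_finite p S, ?_, etaS_coeff p S, ?_, ?_, ?_, ?_⟩
  · -- vanishing
    intro x y hx m hm
    apply finsum_mem_of_eqOn_zero
    intro n hn
    have h1 : 1 ≤ n := hS n hn
    have hc : x.coeff (m - (n : ℤ)) = 0 :=
      HahnSeries.coeff_eq_zero_of_lt_order (by omega)
    show x.coeff (m - (n : ℤ)) * y.coeff (m + (n : ℤ)) = (0 : ℕ → ZMod p) n
    rw [hc, zero_mul, Pi.zero_apply]
  · -- additivity in first variable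
    intro x y z
    ext m
    rw [HahnSeries.coeff_add, etaS_coeff, etaS_coeff, etaS_coeff]
    rw [← finsum_mem_add_distrib' (eta_supp_finite p S x z m) (eta_supp_finite p S y z m)]
    apply finsum_mem_congr rfl
    intro n _
    rw [HahnSeries.coeff_add, add_mul]
  · -- additivity in second variable
    intro x y z
    ext m
    rw [HahnSeries.coeff_add, etaS_coeff, etaS_coeff, etaS_coeff]
    rw [← finsum_mem_add_distrib' (eta_supp_finite p S x y m) (eta_supp_finite p S x z m)]
    apply finsum_mem_congr rfl
    intro n _
    rw [HahnSeries.coeff_add, mul_add]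
  · -- continuity
    have hopen : ∀ (k : ℤ) (c : Kp p), IsOpen
        {x : Kp p | (QuotientAddGroup.mk x : Kp p ⧸ hahnU (ZMod p) k) = QuotientAddGroup.mk c} := by
      intro k c
      have h1 : @IsOpen _ (TopologicalSpace.induced
          (fun x : Kp p => (QuotientAddGroup.mk x : Kp p ⧸ hahnU (ZMod p) k)) ⊥)
          {x : Kp p | (QuotientAddGroup.mk x : Kp p ⧸ hahnU (ZMod p) k) = QuotientAddGroup.mk c} := by
        refine ⟨{(QuotientAddGroup.mk c : Kp p ⧸ hahnU (ZMod p) k)}, trivial, ?_⟩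
        ext x; simp [Set.preimage, Set.mem_setOf_eq]
      exact h1.mono (iInf_le _ k)
    have key : ∀ (k : ℤ) (x₀ y₀ x y : Kp p),
        (∀ j : ℤ, j < max k (2*k - x₀.order) → x.coeff j = x₀.coeff j) →
        (∀ j : ℤ, j < max k (2*k - x₀.order) → y.coeff j = y₀.coeff j) →
        ∀ m : ℤ, m < k → (etaS p S x y).coeff m = (etaS p S x₀ y₀).coeff m := by
      intro k x₀ y₀ x y hx hy m hm
      rw [etaS_coeff, etaS_coeff]
      apply finsum_mem_congr rfl
      intro n hn
      have hn1 : 1 ≤ n := hS n hn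
      have hx' : x.coeff (m - (n : ℤ)) = x₀.coeff (m - (n : ℤ)) := by
        refine hx _ (lt_of_lt_of_le (show m - (n : ℤ) < k by omega) (le_max_left _ _))
      by_cases hc : x₀.coeff (m - (n : ℤ)) = 0
      · rw [hx', hc, zero_mul, zero_mul]
      · have hord : x₀.order ≤ m - (n : ℤ) := HahnSeries.order_le_of_coeff_ne_zero hc
        have hy' : y.coeff (m + (n : ℤ)) = y₀.coeff (m + (n : ℤ)) := by
          refine hy _ (lt_of_lt_of_le (show m + (n : ℤ) < 2*k - x₀.order by omega)
            (le_max_right _ _))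
        rw [hx', hy']
    show @Continuous _ _ _ (⨅ k : ℤ, TopologicalSpace.induced
      (fun x : Kp p => (QuotientAddGroup.mk x : Kp p ⧸ hahnU (ZMod p) k)) ⊥)
      (fun q : Kp p × Kp p => etaS p S q.1 q.2)
    rw [continuous_iInf_rng]
    intro k
    rw [continuous_induced_rng]
    rw [continuous_def]
    intro s _
    rw [isOpen_prod_iff]
    intro x₀ y₀ hmem
    refine ⟨{x : Kp p | (QuotientAddGroup.mk x : Kp p ⧸ hahnU (ZMod p) (max k (2*k - x₀.order)))
        = QuotientAddGroup.mk x₀},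
      {y : Kp p | (QuotientAddGroup.mk y : Kp p ⧸ hahnU (ZMod p) (max k (2*k - x₀.order)))
        = QuotientAddGroup.mk y₀}, hopen _ x₀, hopen _ y₀, rfl, rfl, ?_⟩
    rintro ⟨x, y⟩ ⟨hx, hy⟩
    simp only [Set.mem_setOf_eq] at hx hy
    have hx' : ∀ j : ℤ, j < max k (2*k - x₀.order) → x.coeff j = x₀.coeff j := by
      intro j hj
      have h2 := (QuotientAddGroup.eq).mp hx j hj
      rw [HahnSeries.coeff_add, HahnSeries.coeff_neg] at h2
      exact neg_add_eq_zero.mp h2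
    have hy' : ∀ j : ℤ, j < max k (2*k - x₀.order) → y.coeff j = y₀.coeff j := by
      intro j hj
      have h2 := (QuotientAddGroup.eq).mp hy j hj
      rw [HahnSeries.coeff_add, HahnSeries.coeff_neg] at h2
      exact neg_add_eq_zero.mp h2
    have heq : (QuotientAddGroup.mk (etaS p S x y) : Kp p ⧸ hahnU (ZMod p) k)
        = QuotientAddGroup.mk (etaS p S x₀ y₀) := by
      apply (QuotientAddGroup.eq).mpr
      intro j hj
      rw [HahnSeries.coeff_add, HahnSeries.coeff_neg, key k x₀ y₀ x y hx' hy' j hj,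
        neg_add_cancel]
    show QuotientAddGroup.mk (etaS p S x y) ∈ s
    rw [heq]
    exact hmem
  · -- equivariance
    intro x y
    ext m
    rw [single_one_mul_coeff, etaS_coeff, etaS_coeff]
    apply finsum_mem_congr rfl
    intro n _
    rw [single_one_mul_coeff, single_one_mul_coeff]
    ring_nf
end
end
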